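/- arXiv:2502.06112 — 5 statements merged into one kernel-verified Lean document; each statement's English description precedes it below -/
import Mathlib

section
/- Let T ≥ 2 and s ≥ 1 be natural numbers and let P be a PMF on {0,…,T−1} that is a mixture of s disjoint monotonic distributions; that is, there exist s pairwise disjoint integer intervals I_1,…,I_s ⊆ {0,…,T−1} whose union contains the support of P such that the restriction of P to each I_j is monotone (either nondecreasing or nonincreasing). Then for every integer k > 2s there exists a binning of P with at most k bins whose bit cost Ĥ satisfies Ĥ ≤ H + (3·s·log₂(T)/(k − 2s))·(T/(T−1)), where H is the Shannon entropy of P. -/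
open Finset

/-- The weight of a bin `[p.1, p.2]` with respect to the mass function `P`. -/
noncomputable def binWeight (P : ℕ → ℝ) (p : ℕ × ℕ) : ℝ :=
  ∑ x ∈ Finset.Icc p.1 p.2, P x

/-- The bit cost of a binning `B` with respect to the mass function `P`:
`Σ_i w_i (log₂ T_i − log₂ w_i)`, where `w_i = 0` terms vanish since `logb 2 0 = 0`. -/
noncomputable def bitCost (P : ℕ → ℝ) (B : Finset (ℕ × ℕ)) : ℝ :=
  ∑ p ∈ B, binWeight P p *
    (Real.logb 2 ((p.2 - p.1 + 1 : ℕ) : ℝ) - Real.logb 2 (binWeight P p))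

/-- The Shannon entropy of `P` on `{0, …, T−1}`, with the convention `0 · log₂ 0 = 0`. -/
noncomputable def shannonEntropy (P : ℕ → ℝ) (T : ℕ) : ℝ :=
  ∑ x ∈ Finset.range T, -(P x * Real.logb 2 (P x))

/-- `B` is a binning of `P` over the domain `{0, …, T−1}`: a finite family of
pairwise disjoint integer intervals `[a, b] ⊆ {0, …, T−1}` covering the support of `P`. -/
def IsBinning (P : ℕ → ℝ) (T : ℕ) (B : Finset (ℕ × ℕ)) : Prop :=
  (∀ p ∈ B, p.1 ≤ p.2 ∧ p.2 < T) ∧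
  (∀ p ∈ B, ∀ q ∈ B, p ≠ q → Disjoint (Finset.Icc p.1 p.2) (Finset.Icc q.1 q.2)) ∧
  (∀ x < T, P x ≠ 0 → ∃ p ∈ B, x ∈ Finset.Icc p.1 p.2)

lemma band_bound (P : ℕ → ℝ) (u v : ℕ) (huv : u ≤ v)
    (t ρ : ℝ) (ht : 0 < t) (hρ : 1 ≤ ρ)
    (hlow : ∀ x ∈ Finset.Icc u v, t < P x)
    (hup : ∀ x ∈ Finset.Icc u v, P x ≤ ρ * t) :
    binWeight P (u, v) * (Real.logb 2 ((v - u + 1 : ℕ) : ℝ) - Real.logb 2 (binWeight P (u, v)))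
      ≤ (∑ x ∈ Finset.Icc u v, -(P x * Real.logb 2 (P x)))
        + binWeight P (u, v) * Real.logb 2 ρ := by
  have hρ0 : (0:ℝ) < ρ := lt_of_lt_of_le one_pos hρ
  set w : ℝ := binWeight P (u, v) with hw
  have hcard : (Finset.Icc u v).card = v - u + 1 := by
    rw [Nat.card_Icc]; omega
  have hℓpos : (0:ℝ) < ((v - u + 1 : ℕ) : ℝ) := by positivity
  have hPpos : ∀ x ∈ Finset.Icc u v, 0 < P x := fun x hx => lt_trans ht (hlow x hx)
  have hwge : ((v - u + 1 : ℕ) : ℝ) * t ≤ w := by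
    have : ∑ x ∈ Finset.Icc u v, t ≤ ∑ x ∈ Finset.Icc u v, P x :=
      Finset.sum_le_sum (fun x hx => le_of_lt (hlow x hx))
    simpa [hw, binWeight, Finset.sum_const, hcard, nsmul_eq_mul] using this
  have hwpos : (0:ℝ) < w := lt_of_lt_of_le (by positivity) hwge
  have key : ∀ x ∈ Finset.Icc u v,
      P x * (Real.logb 2 ((v - u + 1 : ℕ) : ℝ) - Real.logb 2 w)
        ≤ -(P x * Real.logb 2 (P x)) + P x * Real.logb 2 ρ := by
    intro x hx
    have hx0 : 0 < P x := hPpos x hx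
    have h1 : ((v - u + 1 : ℕ) : ℝ) * P x ≤ w * ρ := by
      calc ((v - u + 1 : ℕ) : ℝ) * P x ≤ ((v - u + 1 : ℕ) : ℝ) * (ρ * t) := by
              exact mul_le_mul_of_nonneg_left (hup x hx) (le_of_lt hℓpos)
        _ = (((v - u + 1 : ℕ) : ℝ) * t) * ρ := by ring
        _ ≤ w * ρ := mul_le_mul_of_nonneg_right hwge (le_of_lt hρ0)
    have h2 : Real.logb 2 (((v - u + 1 : ℕ) : ℝ) * P x) ≤ Real.logb 2 (w * ρ) :=
      Real.logb_le_logb_of_le (by norm_num) (by positivity) h1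
    rw [Real.logb_mul (ne_of_gt hℓpos) (ne_of_gt hx0),
        Real.logb_mul (ne_of_gt hwpos) (ne_of_gt hρ0)] at h2
    nlinarith [hx0]
  calc w * (Real.logb 2 ((v - u + 1 : ℕ) : ℝ) - Real.logb 2 w)
      = ∑ x ∈ Finset.Icc u v, P x * (Real.logb 2 ((v - u + 1 : ℕ) : ℝ) - Real.logb 2 w) := by
        rw [hw, binWeight, Finset.sum_mul]
    _ ≤ ∑ x ∈ Finset.Icc u v, (-(P x * Real.logb 2 (P x)) + P x * Real.logb 2 ρ) :=
        Finset.sum_le_sum key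
    _ = (∑ x ∈ Finset.Icc u v, -(P x * Real.logb 2 (P x))) + w * Real.logb 2 ρ := by
        rw [Finset.sum_add_distrib, hw, binWeight, Finset.sum_mul]

lemma tail_bound (P : ℕ → ℝ) (hP0 : ∀ x, 0 ≤ P x) (u v : ℕ) (huv : u ≤ v)
    (C : ℝ) (hC : 0 ≤ C) (hup : ∀ x ∈ Finset.Icc u v, P x ≤ C) :
    binWeight P (u, v) * (Real.logb 2 ((v - u + 1 : ℕ) : ℝ) - Real.logb 2 (binWeight P (u, v)))
      ≤ (∑ x ∈ Finset.Icc u v, -(P x * Real.logb 2 (P x)))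
        + ((v - u + 1 : ℕ) : ℝ) * C := by
  set w : ℝ := binWeight P (u, v) with hw
  have hcard : (Finset.Icc u v).card = v - u + 1 := by rw [Nat.card_Icc]; omega
  have hℓpos : (0:ℝ) < ((v - u + 1 : ℕ) : ℝ) := by positivity
  have hw0 : 0 ≤ w := Finset.sum_nonneg (fun x _ => hP0 x)
  rcases eq_or_lt_of_le hw0 with hweq | hwpos
  · -- w = 0
    have hz : ∀ x ∈ Finset.Icc u v, P x = 0 := by
      intro x hx
      exact (Finset.sum_eq_zero_iff_of_nonneg (fun y _ => hP0 y)).1 hweq.symm x hx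
    have h1 : (∑ x ∈ Finset.Icc u v, -(P x * Real.logb 2 (P x))) = 0 :=
      Finset.sum_eq_zero (fun x hx => by rw [hz x hx]; ring)
    rw [← hweq, h1]
    simp
    positivity
  · -- w > 0
    have hCpos : 0 < C := by
      obtain ⟨x, hx, hxpos⟩ : ∃ x ∈ Finset.Icc u v, 0 < P x := by
        by_contra h
        push_neg at h
        have : w ≤ 0 := Finset.sum_nonpos (fun x hx => h x hx)
        linarith
      exact lt_of_lt_of_le hxpos (hup x hx)
    have hent : -w * Real.logb 2 C ≤ ∑ x ∈ Finset.Icc u v, -(P x * Real.logb 2 (P x)) := by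
      have : ∀ x ∈ Finset.Icc u v, -(P x * Real.logb 2 C) ≤ -(P x * Real.logb 2 (P x)) := by
        intro x hx
        rcases eq_or_lt_of_le (hP0 x) with h0 | h0
        · rw [← h0]; simp
        · have : Real.logb 2 (P x) ≤ Real.logb 2 C :=
            Real.logb_le_logb_of_le (by norm_num) h0 (hup x hx)
          nlinarith
      calc -w * Real.logb 2 C = ∑ x ∈ Finset.Icc u v, -(P x * Real.logb 2 C) := by
            rw [hw, binWeight, neg_mul, Finset.sum_mul]
            rw [← Finset.sum_neg_distrib]
        _ ≤ _ := Finset.sum_le_sum this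
    -- need: w * (logb ℓ - logb w) + w * logb C ≤ ℓ * C, i.e. w * logb (ℓC/w) ≤ ℓ C
    set ℓ : ℝ := ((v - u + 1 : ℕ) : ℝ)
    have hD : 0 < ℓ * C := by positivity
    have hlog : Real.log (ℓ * C / w) ≤ (ℓ * C) / (w * Real.exp 1) := by
      have h1 : 0 < ℓ * C / (w * Real.exp 1) := by positivity
      have := Real.log_le_sub_one_of_pos h1
      have hrw : Real.log (ℓ * C / (w * Real.exp 1)) = Real.log (ℓ * C / w) - 1 := by
        rw [show ℓ * C / (w * Real.exp 1) = (ℓ * C / w) / Real.exp 1 by ring]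
        rw [Real.log_div (by positivity) (by positivity), Real.log_exp]
      rw [hrw] at this
      linarith
    have hln2 : (0.6931471803 : ℝ) < Real.log 2 := Real.log_two_gt_d9
    have he : (2.7182818283 : ℝ) < Real.exp 1 := Real.exp_one_gt_d9
    have hmain : w * (Real.logb 2 ℓ - Real.logb 2 w) + w * Real.logb 2 C ≤ ℓ * C := by
      have hcomb : Real.logb 2 ℓ - Real.logb 2 w + Real.logb 2 C = Real.log (ℓ * C / w) / Real.log 2 := by
        rw [Real.log_div (by positivity) (ne_of_gt hwpos), Real.log_mul (by positivity) (ne_of_gt hCpos)]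
        simp [Real.logb]
        ring
      have : w * (Real.logb 2 ℓ - Real.logb 2 w + Real.logb 2 C) = w * Real.log (ℓ * C / w) / Real.log 2 := by
        rw [hcomb]; ring
      have hle : w * Real.log (ℓ * C / w) ≤ (ℓ * C) / Real.exp 1 := by
        calc w * Real.log (ℓ * C / w) ≤ w * ((ℓ * C) / (w * Real.exp 1)) :=
              mul_le_mul_of_nonneg_left hlog hw0
          _ = (ℓ * C) / Real.exp 1 := by field_simp
      have hfin : w * Real.log (ℓ * C / w) / Real.log 2 ≤ ℓ * C := by
        rw [div_le_iff₀ (by linarith)]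
        calc w * Real.log (ℓ * C / w) ≤ (ℓ * C) / Real.exp 1 := hle
          _ ≤ ℓ * C * Real.log 2 := by
              rw [div_le_iff₀ (by positivity)]
              have : (1:ℝ) ≤ Real.log 2 * Real.exp 1 := by nlinarith
              nlinarith [hD]
      linarith [this ▸ hfin, (by ring : w * (Real.logb 2 ℓ - Real.logb 2 w + Real.logb 2 C) = w * (Real.logb 2 ℓ - Real.logb 2 w) + w * Real.logb 2 C), this]
    linarith [hent, hmain]

lemma interval_binning (P : ℕ → ℝ) (hP0 : ∀ x, 0 ≤ P x) (a b : ℕ) (hab : a ≤ b)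
    (m : ℕ) (hm : 1 ≤ m) (ρ : ℝ) (hρ : 1 < ρ)
    (hmono : (∀ x y, a ≤ x → x ≤ y → y ≤ b → P x ≤ P y) ∨
             (∀ x y, a ≤ x → x ≤ y → y ≤ b → P y ≤ P x)) :
    ∃ Bj : Finset (ℕ × ℕ),
      (∀ p ∈ Bj, a ≤ p.1 ∧ p.1 ≤ p.2 ∧ p.2 ≤ b) ∧
      (∀ p ∈ Bj, ∀ q ∈ Bj, p ≠ q → Disjoint (Finset.Icc p.1 p.2) (Finset.Icc q.1 q.2)) ∧
      (∀ x ∈ Finset.Icc a b, ∃ p ∈ Bj, x ∈ Finset.Icc p.1 p.2) ∧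
      Bj.card ≤ m + 1 ∧
      bitCost P Bj ≤ (∑ x ∈ Finset.Icc a b, -(P x * Real.logb 2 (P x)))
        + binWeight P (a, b) * Real.logb 2 ρ
        + ((b - a + 1 : ℕ) : ℝ) * (binWeight P (a, b) / ρ ^ m) := by
  have hρ0 : (0:ℝ) < ρ := lt_trans one_pos hρ
  set w : ℝ := binWeight P (a, b) with hwdef
  have hw0 : 0 ≤ w := Finset.sum_nonneg (fun x _ => hP0 x)
  have hPle : ∀ x ∈ Finset.Icc a b, P x ≤ w :=
    fun x hx => Finset.single_le_sum (fun y _ => hP0 y) hx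
  have hex : ∀ x : ℕ, ∃ i, i = m ∨ w / ρ ^ (i + 1) < P x := fun _ => ⟨m, Or.inl rfl⟩
  set lv : ℕ → ℕ := fun x => Nat.find (hex x) with hlvdef
  have lv_le : ∀ x, lv x ≤ m := fun x => Nat.find_le (Or.inl rfl)
  have lv_spec : ∀ x, lv x = m ∨ w / ρ ^ (lv x + 1) < P x := fun x => Nat.find_spec (hex x)
  have lv_min : ∀ x i, i < lv x → ¬(i = m ∨ w / ρ ^ (i + 1) < P x) :=
    fun x i h => Nat.find_min (hex x) h
  have lv_lower : ∀ x, lv x < m → w / ρ ^ (lv x + 1) < P x := by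
    intro x h
    rcases lv_spec x with h1 | h2
    · omega
    · exact h2
  have lv_upper : ∀ x, 0 < lv x → P x ≤ w / ρ ^ (lv x) := by
    intro x h
    have hmin := lv_min x (lv x - 1) (by omega)
    push_neg at hmin
    have h2 := hmin.2
    have : lv x - 1 + 1 = lv x := by omega
    rw [this] at h2
    linarith
  have lv_mono : ∀ x y, P x ≤ P y → lv y ≤ lv x := by
    intro x y hxy
    rcases lv_spec x with h1 | h2
    · rw [h1]; exact lv_le y
    · exact Nat.find_min' (hex y) (Or.inr (lt_of_lt_of_le h2 hxy))
  classical
  set S : ℕ → Finset ℕ := fun i => (Finset.Icc a b).filter (fun x => lv x = i) with hSdef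
  have S_mem : ∀ i x, x ∈ S i ↔ (x ∈ Finset.Icc a b ∧ lv x = i) := by
    intro i x; simp [hSdef]
  have S_int : ∀ i, ∀ x ∈ S i, ∀ y ∈ S i, ∀ z, x ≤ z → z ≤ y → z ∈ S i := by
    intro i x hx y hy z hxz hzy
    rw [S_mem] at hx hy ⊢
    obtain ⟨hxab, hxlv⟩ := hx
    obtain ⟨hyab, hylv⟩ := hy
    rw [Finset.mem_Icc] at hxab hyab
    have hzab : a ≤ z ∧ z ≤ b := ⟨le_trans hxab.1 hxz, le_trans hzy hyab.2⟩
    refine ⟨Finset.mem_Icc.2 hzab, ?_⟩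
    rcases hmono with hinc | hdec
    · have h1 : P x ≤ P z := hinc x z hxab.1 hxz hzab.2
      have h2 : P z ≤ P y := hinc z y hzab.1 hzy hyab.2
      have := lv_mono x z h1
      have := lv_mono z y h2
      omega
    · have h1 : P z ≤ P x := hdec x z hxab.1 hxz hzab.2
      have h2 : P y ≤ P z := hdec z y hzab.1 hzy hyab.2
      have := lv_mono z x h1
      have := lv_mono y z h2
      omega
  set pr : ℕ → ℕ × ℕ :=
    fun i => if h : (S i).Nonempty then ((S i).min' h, (S i).max' h) else (1, 0) with hprdef
  have pr_icc : ∀ i, (h : (S i).Nonempty) → Finset.Icc (pr i).1 (pr i).2 = S i := by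
    intro i h
    simp only [hprdef, dif_pos h]
    ext z
    simp only [Finset.mem_Icc]
    constructor
    · rintro ⟨h1, h2⟩
      exact S_int i _ ((S i).min'_mem h) _ ((S i).max'_mem h) z h1 h2
    · intro hz
      exact ⟨(S i).min'_le z hz, (S i).le_max' z hz⟩
  have pr_fst_mem : ∀ i, (h : (S i).Nonempty) → (pr i).1 ∈ S i := by
    intro i h
    simp only [hprdef, dif_pos h]
    exact (S i).min'_mem h
  set F : Finset ℕ := (Finset.range (m + 1)).filter (fun i => (S i).Nonempty) with hFdef
  set Bj : Finset (ℕ × ℕ) := F.image pr with hBjdef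
  have hFmem : ∀ i, i ∈ F ↔ (i < m + 1 ∧ (S i).Nonempty) := by
    intro i; simp [hFdef]
  have pr_inj : ∀ i ∈ F, ∀ j ∈ F, pr i = pr j → i = j := by
    intro i hi j hj hij
    have hiN : (S i).Nonempty := ((hFmem i).1 hi).2
    have hjN : (S j).Nonempty := ((hFmem j).1 hj).2
    have h1 : (pr i).1 ∈ S i := pr_fst_mem i hiN
    have h2 : (pr j).1 ∈ S j := pr_fst_mem j hjN
    rw [hij] at h1
    rw [S_mem] at h1 h2
    omega
  -- membership description of Bj
  have hBjmem : ∀ p, p ∈ Bj ↔ ∃ i ∈ F, pr i = p := by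
    intro p; simp [hBjdef]
  refine ⟨Bj, ?_, ?_, ?_, ?_, ?_⟩
  · -- bounds
    intro p hp
    obtain ⟨i, hi, hpi⟩ := (hBjmem p).1 hp
    have hiN : (S i).Nonempty := ((hFmem i).1 hi).2
    have h1 : (pr i).1 ∈ S i := pr_fst_mem i hiN
    have h2 : (pr i).2 ∈ S i := by
      simp only [hprdef, dif_pos hiN]; exact (S i).max'_mem hiN
    have h12 : (pr i).1 ≤ (pr i).2 := by
      simp only [hprdef, dif_pos hiN]; exact (S i).min'_le _ ((S i).max'_mem hiN)
    rw [S_mem] at h1 h2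
    rw [Finset.mem_Icc] at *
    subst hpi
    exact ⟨h1.1.1, h12, h2.1.2⟩
  · -- disjoint
    intro p hp q hq hpq
    obtain ⟨i, hi, hpi⟩ := (hBjmem p).1 hp
    obtain ⟨j, hj, hqj⟩ := (hBjmem q).1 hq
    have hiN : (S i).Nonempty := ((hFmem i).1 hi).2
    have hjN : (S j).Nonempty := ((hFmem j).1 hj).2
    have hij : i ≠ j := by
      intro h; subst h; rw [hpi] at hqj; exact hpq hqj
    subst hpi hqj
    rw [pr_icc i hiN, pr_icc j hjN]
    rw [Finset.disjoint_left]
    intro x hx hx'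
    rw [S_mem] at hx hx'
    omega
  · -- cover
    intro x hx
    have hxS : x ∈ S (lv x) := (S_mem _ x).2 ⟨hx, rfl⟩
    have hNE : (S (lv x)).Nonempty := ⟨x, hxS⟩
    have hiF : lv x ∈ F := (hFmem _).2 ⟨by have := lv_le x; omega, hNE⟩
    refine ⟨pr (lv x), (hBjmem _).2 ⟨lv x, hiF, rfl⟩, ?_⟩
    rw [pr_icc _ hNE]; exact hxS
  · -- card
    calc Bj.card ≤ F.card := Finset.card_image_le
      _ ≤ (Finset.range (m + 1)).card := Finset.card_filter_le _ _
      _ = m + 1 := Finset.card_range _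
  · -- bit cost
    have hsum : bitCost P Bj = ∑ i ∈ F, (binWeight P (pr i) *
        (Real.logb 2 (((pr i).2 - (pr i).1 + 1 : ℕ) : ℝ) - Real.logb 2 (binWeight P (pr i)))) := by
      rw [bitCost, hBjdef, Finset.sum_image pr_inj]
    have hweq : ∀ i, (h : (S i).Nonempty) → binWeight P (pr i) = ∑ x ∈ S i, P x := by
      intro i h
      rw [binWeight, pr_icc i h]
    have key : ∀ i ∈ F, (binWeight P (pr i) *
        (Real.logb 2 (((pr i).2 - (pr i).1 + 1 : ℕ) : ℝ) - Real.logb 2 (binWeight P (pr i))))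
        ≤ (∑ x ∈ S i, -(P x * Real.logb 2 (P x))) + (∑ x ∈ S i, P x) * Real.logb 2 ρ
          + (if i = m then ((b - a + 1 : ℕ) : ℝ) * (w / ρ ^ m) else 0) := by
      intro i hi
      have hiN : (S i).Nonempty := ((hFmem i).1 hi).2
      have hile : i ≤ m := by have := (hFmem i).1 hi; omega
      have h12 : (pr i).1 ≤ (pr i).2 := by
        simp only [hprdef, dif_pos hiN]; exact (S i).min'_le _ ((S i).max'_mem hiN)
      have hicc : Finset.Icc (pr i).1 (pr i).2 = S i := pr_icc i hiN
      have hmemS : ∀ x ∈ Finset.Icc (pr i).1 (pr i).2, x ∈ Finset.Icc a b ∧ lv x = i := by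
        intro x hx; rw [hicc, S_mem] at hx; exact hx
      rcases eq_or_lt_of_le hile with him | hilt
      · -- tail bin
        have hC0 : 0 ≤ w / ρ ^ m := by positivity
        have hup : ∀ x ∈ Finset.Icc (pr i).1 (pr i).2, P x ≤ w / ρ ^ m := by
          intro x hx
          obtain ⟨hxab, hxlv⟩ := hmemS x hx
          have h := lv_upper x (by omega)
          rw [hxlv, him] at h
          exact h
        have hmain := tail_bound P hP0 (pr i).1 (pr i).2 h12 (w / ρ ^ m) hC0 hup
        have hbw : binWeight P ((pr i).1, (pr i).2) = binWeight P (pr i) := by rfl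
        rw [hbw] at hmain
        have hlenle : (((pr i).2 - (pr i).1 + 1 : ℕ) : ℝ) ≤ ((b - a + 1 : ℕ) : ℝ) := by
          have h1 := (hmemS (pr i).1 (by rw [Finset.mem_Icc]; omega)).1
          have h2 := (hmemS (pr i).2 (by rw [Finset.mem_Icc]; omega)).1
          rw [Finset.mem_Icc] at h1 h2
          have hnat : (pr i).2 - (pr i).1 + 1 ≤ b - a + 1 := by omega
          exact Nat.cast_le.2 hnat
        have hterm : (((pr i).2 - (pr i).1 + 1 : ℕ) : ℝ) * (w / ρ ^ m)
            ≤ ((b - a + 1 : ℕ) : ℝ) * (w / ρ ^ m) := mul_le_mul_of_nonneg_right hlenle hC0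
        have hnn : 0 ≤ (∑ x ∈ S i, P x) * Real.logb 2 ρ := by
          apply mul_nonneg (Finset.sum_nonneg (fun x _ => hP0 x))
          exact Real.logb_nonneg (by norm_num) (le_of_lt hρ)
        rw [if_pos him]
        calc _ ≤ (∑ x ∈ Finset.Icc (pr i).1 (pr i).2, -(P x * Real.logb 2 (P x)))
              + (((pr i).2 - (pr i).1 + 1 : ℕ) : ℝ) * (w / ρ ^ m) := hmain
          _ ≤ (∑ x ∈ S i, -(P x * Real.logb 2 (P x))) + (∑ x ∈ S i, P x) * Real.logb 2 ρ
              + ((b - a + 1 : ℕ) : ℝ) * (w / ρ ^ m) := by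
            rw [hicc]; linarith
      · -- band bin
        have hlow : ∀ x ∈ Finset.Icc (pr i).1 (pr i).2, w / ρ ^ (i + 1) < P x := by
          intro x hx
          obtain ⟨hxab, hxlv⟩ := hmemS x hx
          have := lv_lower x (by omega)
          rw [hxlv] at this
          exact this
        have hup : ∀ x ∈ Finset.Icc (pr i).1 (pr i).2, P x ≤ ρ * (w / ρ ^ (i + 1)) := by
          intro x hx
          obtain ⟨hxab, hxlv⟩ := hmemS x hx
          have heq : ρ * (w / ρ ^ (i + 1)) = w / ρ ^ i := by
            rw [pow_succ]
            field_simp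
          rw [heq]
          rcases Nat.eq_zero_or_pos i with hi0 | hipos
          · subst hi0; simpa using hPle x hxab
          · have := lv_upper x (by omega)
            rw [hxlv] at this
            exact this
        have ht : 0 < w / ρ ^ (i + 1) := by
          have hx1 : (pr i).1 ∈ Finset.Icc (pr i).1 (pr i).2 := by rw [Finset.mem_Icc]; omega
          have h1 := hlow (pr i).1 hx1
          have h2 := hPle (pr i).1 (hmemS _ hx1).1
          have hQ : 0 ≤ w / ρ ^ (i + 1) := by positivity
          have hw' : 0 < w := lt_of_le_of_lt hQ (lt_of_lt_of_le h1 h2)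
          positivity
        have := band_bound P (pr i).1 (pr i).2 h12 (w / ρ ^ (i + 1)) ρ ht (le_of_lt hρ) hlow hup
        have hbw : binWeight P ((pr i).1, (pr i).2) = binWeight P (pr i) := by rfl
        rw [hbw] at this
        rw [if_neg (by omega)]
        calc _ ≤ (∑ x ∈ Finset.Icc (pr i).1 (pr i).2, -(P x * Real.logb 2 (P x)))
              + binWeight P (pr i) * Real.logb 2 ρ := this
          _ = (∑ x ∈ S i, -(P x * Real.logb 2 (P x))) + (∑ x ∈ S i, P x) * Real.logb 2 ρ + 0 := by
            rw [hicc, hweq i hiN]; ring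
          _ ≤ _ := le_refl _
    -- sum the per-bin bounds
    have hdisjS : (↑F : Set ℕ).PairwiseDisjoint S := by
      intro i _ j _ hij
      simp only [Function.onFun]
      rw [Finset.disjoint_left]
      intro x hx hx'
      rw [S_mem] at hx hx'
      omega
    have hUnion : F.biUnion S = Finset.Icc a b := by
      ext x
      simp only [Finset.mem_biUnion]
      constructor
      · rintro ⟨i, hi, hx⟩
        exact ((S_mem i x).1 hx).1
      · intro hx
        refine ⟨lv x, ?_, (S_mem _ x).2 ⟨hx, rfl⟩⟩
        exact (hFmem _).2 ⟨by have := lv_le x; omega, ⟨x, (S_mem _ x).2 ⟨hx, rfl⟩⟩⟩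
    have hEnt : ∑ i ∈ F, ∑ x ∈ S i, -(P x * Real.logb 2 (P x))
        = ∑ x ∈ Finset.Icc a b, -(P x * Real.logb 2 (P x)) := by
      rw [← Finset.sum_biUnion hdisjS, hUnion]
    have hW : ∑ i ∈ F, ∑ x ∈ S i, P x = w := by
      rw [← Finset.sum_biUnion hdisjS, hUnion, hwdef, binWeight]
    have hIte : ∑ i ∈ F, (if i = m then ((b - a + 1 : ℕ) : ℝ) * (w / ρ ^ m) else 0)
        ≤ ((b - a + 1 : ℕ) : ℝ) * (w / ρ ^ m) := by
      rw [Finset.sum_ite_eq' F m (fun _ => ((b - a + 1 : ℕ) : ℝ) * (w / ρ ^ m))]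
      split
      · exact le_refl _
      · positivity
    calc bitCost P Bj = ∑ i ∈ F, (binWeight P (pr i) *
          (Real.logb 2 (((pr i).2 - (pr i).1 + 1 : ℕ) : ℝ) - Real.logb 2 (binWeight P (pr i)))) := hsum
      _ ≤ ∑ i ∈ F, ((∑ x ∈ S i, -(P x * Real.logb 2 (P x))) + (∑ x ∈ S i, P x) * Real.logb 2 ρ
          + (if i = m then ((b - a + 1 : ℕ) : ℝ) * (w / ρ ^ m) else 0)) := Finset.sum_le_sum key
      _ = (∑ i ∈ F, ∑ x ∈ S i, -(P x * Real.logb 2 (P x)))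
          + (∑ i ∈ F, ∑ x ∈ S i, P x) * Real.logb 2 ρ
          + ∑ i ∈ F, (if i = m then ((b - a + 1 : ℕ) : ℝ) * (w / ρ ^ m) else 0) := by
        rw [Finset.sum_add_distrib, Finset.sum_add_distrib, Finset.sum_mul]
      _ ≤ (∑ x ∈ Finset.Icc a b, -(P x * Real.logb 2 (P x))) + w * Real.logb 2 ρ
          + ((b - a + 1 : ℕ) : ℝ) * (w / ρ ^ m) := by
        rw [hEnt, hW]; linarith [hIte]

set_option maxHeartbeats 1000000 in
/-- **Theorem 1 of the paper.** If `P` is a PMF on `{0, …, T−1}` that is a mixture of `s`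
disjoint monotonic distributions, then for any `k > 2s` there is a binning with at most `k`
bins whose bit cost `Ĥ` satisfies `Ĥ ≤ H + (3 s log₂ T / (k − 2s)) · (T / (T − 1))`. -/
theorem binning_bit_cost_bound_for_mixtures
    (T s k : ℕ) (hT : 2 ≤ T) (hs : 1 ≤ s) (hk : 2 * s < k)
    (P : ℕ → ℝ) (hP0 : ∀ x, 0 ≤ P x) (hPsum : ∑ x ∈ Finset.range T, P x = 1)
    (I : Fin s → ℕ × ℕ)
    (hIle : ∀ j, (I j).1 ≤ (I j).2)
    (hIsub : ∀ j, (I j).2 < T)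
    (hIdisj : ∀ j l, j ≠ l →
      Disjoint (Finset.Icc (I j).1 (I j).2) (Finset.Icc (I l).1 (I l).2))
    (hIcover : ∀ x < T, P x ≠ 0 → ∃ j, x ∈ Finset.Icc (I j).1 (I j).2)
    (hImono : ∀ j,
      (∀ x y, (I j).1 ≤ x → x ≤ y → y ≤ (I j).2 → P x ≤ P y) ∨
      (∀ x y, (I j).1 ≤ x → x ≤ y → y ≤ (I j).2 → P y ≤ P x)) :
    ∃ B : Finset (ℕ × ℕ), IsBinning P T B ∧ B.card ≤ k ∧
      bitCost P B ≤ shannonEntropy P T +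
        3 * s * Real.logb 2 T / ((k : ℝ) - 2 * s) * ((T : ℝ) / ((T : ℝ) - 1)) := by
  classical
  have hspos : 0 < s := hs
  have hTR : (2:ℝ) ≤ (T:ℝ) := by exact_mod_cast hT
  have hkR : 2 * (s:ℝ) < (k:ℝ) := by exact_mod_cast hk
  have hkpos : (0:ℝ) < (k:ℝ) - 2 * s := by linarith
  have hL1 : 1 ≤ Real.logb 2 T := by
    have := Real.logb_self_eq_one (b := 2) (by norm_num)
    calc (1:ℝ) = Real.logb 2 2 := this.symm
      _ ≤ Real.logb 2 T := Real.logb_le_logb_of_le (by norm_num) (by norm_num) hTR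
  have hEnn : 0 ≤ 3 * (s:ℝ) * Real.logb 2 T / ((k : ℝ) - 2 * s) * ((T : ℝ) / ((T : ℝ) - 1)) := by
    have h1 : (0:ℝ) ≤ 3 * (s:ℝ) * Real.logb 2 T := by positivity
    have h2 : (0:ℝ) < (T:ℝ) - 1 := by linarith
    positivity
  by_cases hTk : T ≤ k
  · -- use singleton bins
    refine ⟨((Finset.range T).filter (fun x => P x ≠ 0)).image (fun x => (x, x)), ?_, ?_, ?_⟩
    · refine ⟨?_, ?_, ?_⟩
      · intro p hp
        simp only [Finset.mem_image, Finset.mem_filter, Finset.mem_range] at hp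
        obtain ⟨x, ⟨hx, _⟩, hxp⟩ := hp
        subst hxp
        exact ⟨le_refl _, hx⟩
      · intro p hp q hq hpq
        simp only [Finset.mem_image, Finset.mem_filter, Finset.mem_range] at hp hq
        obtain ⟨x, _, hxp⟩ := hp
        obtain ⟨y, _, hyq⟩ := hq
        subst hxp hyq
        simp only [Finset.Icc_self]
        rw [Finset.disjoint_singleton]
        intro h; exact hpq (by rw [h])
      · intro x hx hPx
        refine ⟨(x, x), ?_, by simp⟩
        simp only [Finset.mem_image, Finset.mem_filter, Finset.mem_range]
        exact ⟨x, ⟨hx, hPx⟩, rfl⟩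
    · calc _ ≤ ((Finset.range T).filter (fun x => P x ≠ 0)).card := Finset.card_image_le
        _ ≤ (Finset.range T).card := Finset.card_filter_le _ _
        _ = T := Finset.card_range T
        _ ≤ k := hTk
    · have hinj : ∀ x ∈ (Finset.range T).filter (fun x => P x ≠ 0),
          ∀ y ∈ (Finset.range T).filter (fun x => P x ≠ 0), (x, x) = (y, y) → x = y := by
        intro x _ y _ h
        exact congrArg Prod.fst h
      have hcost : bitCost P (((Finset.range T).filter (fun x => P x ≠ 0)).image (fun x => (x, x)))
          = shannonEntropy P T := by
        rw [bitCost, Finset.sum_image hinj]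
        have hterm : ∀ x ∈ (Finset.range T).filter (fun x => P x ≠ 0),
            binWeight P (x, x) * (Real.logb 2 (((x, x).2 - (x, x).1 + 1 : ℕ) : ℝ)
              - Real.logb 2 (binWeight P (x, x))) = -(P x * Real.logb 2 (P x)) := by
          intro x _
          have hbw : binWeight P (x, x) = P x := by
            rw [binWeight]; simp
          rw [hbw]
          norm_num
        rw [Finset.sum_congr rfl hterm, shannonEntropy]
        apply Finset.sum_filter_of_ne
        intro x _ h hPx
        apply h
        rw [hPx]
        ring
      rw [hcost]
      linarith
  · -- main construction
    push_neg at hTk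
    set m : ℕ := k / s - 1 with hmdef
    have hks : 2 ≤ k / s := (Nat.le_div_iff_mul_le hspos).2 (by omega)
    have hm1 : 1 ≤ m := by omega
    have hmk : m ≤ k - 1 := by
      have := Nat.div_le_self k s
      omega
    have hmT : m ≤ T := by omega
    have hdm := Nat.div_add_mod k s
    have hmod : k % s < s := Nat.mod_lt k hspos
    have hprod : s * m + s = s * (k / s) := by
      have : k / s = m + 1 := by omega
      rw [this]; ring
    have hsmk : k + 1 ≤ s * m + 2 * s := by omega
    have hkm : (k:ℝ) - 2 * s ≤ (s:ℝ) * m := by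
      have : (k:ℝ) + 1 ≤ (s:ℝ) * m + 2 * s := by exact_mod_cast hsmk
      linarith
    have hmR : (1:ℝ) ≤ (m:ℝ) := by exact_mod_cast hm1
    have hmpos : (0:ℝ) < (m:ℝ) := by linarith
    have hbase : (1:ℝ) < (m:ℝ) * (T:ℝ)^2 := by nlinarith
    set ρ : ℝ := ((m:ℝ) * (T:ℝ)^2) ^ ((m:ℝ)⁻¹) with hρdef
    have hbasepos : (0:ℝ) < (m:ℝ) * (T:ℝ)^2 := by positivity
    have hρ1 : 1 < ρ := by
      rw [hρdef]
      exact (Real.one_lt_rpow_iff_of_pos hbasepos).2 (Or.inl ⟨hbase, by positivity⟩)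
    have hρm : ρ ^ m = (m:ℝ) * (T:ℝ)^2 := by
      rw [hρdef, ← Real.rpow_natCast (((m:ℝ) * (T:ℝ)^2) ^ ((m:ℝ)⁻¹)) m,
        ← Real.rpow_mul (le_of_lt hbasepos), inv_mul_cancel₀ (ne_of_gt hmpos), Real.rpow_one]
    have hlogρ : Real.logb 2 ρ ≤ 3 * Real.logb 2 T / m := by
      have h1 : Real.log ρ = (m:ℝ)⁻¹ * Real.log ((m:ℝ) * (T:ℝ)^2) := Real.log_rpow hbasepos _
      have h2 : Real.log ((m:ℝ) * (T:ℝ)^2) = Real.log m + 2 * Real.log T := by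
        rw [Real.log_mul (by positivity) (by positivity), Real.log_pow]
        push_cast
        ring
      have h3 : Real.log (m:ℝ) ≤ Real.log (T:ℝ) :=
        Real.log_le_log (by positivity) (by exact_mod_cast hmT)
      have h4 : Real.log ρ ≤ (m:ℝ)⁻¹ * (3 * Real.log T) := by
        rw [h1, h2]
        apply mul_le_mul_of_nonneg_left _ (by positivity)
        linarith
      have hlog2 : (0:ℝ) < Real.log 2 := Real.log_pos (by norm_num)
      have h5 : Real.logb 2 ρ ≤ ((m:ℝ)⁻¹ * (3 * Real.log T)) / Real.log 2 := by
        rw [Real.logb]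
        exact (div_le_div_iff_of_pos_right hlog2).2 h4
      calc Real.logb 2 ρ ≤ ((m:ℝ)⁻¹ * (3 * Real.log T)) / Real.log 2 := h5
        _ = 3 * Real.logb 2 T / m := by
          rw [Real.logb]
          ring
    -- construct per-interval binnings
    choose Bj hB1 hB2 hB3 hB4 hB5 using fun j : Fin s =>
      interval_binning P hP0 (I j).1 (I j).2 (hIle j) m hm1 ρ hρ1 (hImono j)
    have hsubI : ∀ j, ∀ p ∈ Bj j, Finset.Icc p.1 p.2 ⊆ Finset.Icc (I j).1 (I j).2 := by
      intro j p hp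
      obtain ⟨h1, h2, h3⟩ := hB1 j p hp
      exact Finset.Icc_subset_Icc h1 h3
    have hdisjB : ∀ j l : Fin s, j ≠ l → Disjoint (Bj j) (Bj l) := by
      intro j l hjl
      rw [Finset.disjoint_left]
      intro p hpj hpl
      obtain ⟨h1, h2, h3⟩ := hB1 j p hpj
      obtain ⟨h1', h2', h3'⟩ := hB1 l p hpl
      have hmem : p.1 ∈ Finset.Icc (I j).1 (I j).2 := Finset.mem_Icc.2 ⟨h1, le_trans h2 h3⟩
      have hmem' : p.1 ∈ Finset.Icc (I l).1 (I l).2 := Finset.mem_Icc.2 ⟨h1', le_trans h2' h3'⟩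
      exact Finset.disjoint_left.1 (hIdisj j l hjl) hmem hmem'
    set B : Finset (ℕ × ℕ) := Finset.univ.biUnion Bj with hBdef
    have hBmem : ∀ p, p ∈ B ↔ ∃ j, p ∈ Bj j := by
      intro p; simp [hBdef]
    refine ⟨B, ⟨?_, ?_, ?_⟩, ?_, ?_⟩
    · intro p hp
      obtain ⟨j, hj⟩ := (hBmem p).1 hp
      obtain ⟨h1, h2, h3⟩ := hB1 j p hj
      exact ⟨h2, lt_of_le_of_lt h3 (hIsub j)⟩
    · intro p hp q hq hpq
      obtain ⟨j, hj⟩ := (hBmem p).1 hp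
      obtain ⟨l, hl⟩ := (hBmem q).1 hq
      by_cases hjl : j = l
      · subst hjl
        exact hB2 j p hj q hl hpq
      · exact Disjoint.mono (hsubI j p hj) (hsubI l q hl) (hIdisj j l hjl)
    · intro x hx hPx
      obtain ⟨j, hj⟩ := hIcover x hx hPx
      obtain ⟨p, hp, hxp⟩ := hB3 j x hj
      exact ⟨p, (hBmem p).2 ⟨j, hp⟩, hxp⟩
    · -- cardinality
      calc B.card ≤ ∑ j : Fin s, (Bj j).card := Finset.card_biUnion_le
        _ ≤ ∑ j : Fin s, (m + 1) := Finset.sum_le_sum (fun j _ => hB4 j)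
        _ = s * (m + 1) := by
            rw [Finset.sum_const, Finset.card_univ, Fintype.card_fin, smul_eq_mul]
        _ = s * m + s := by ring
        _ = s * (k / s) := hprod
        _ ≤ k := by omega
    · -- the cost bound
      have hcost : bitCost P B = ∑ j : Fin s, bitCost P (Bj j) := by
        rw [hBdef, bitCost]
        rw [Finset.sum_biUnion (fun j _ l _ hjl => hdisjB j l hjl)]
        rfl
      -- per interval bound with uniform constant
      set L : ℝ := Real.logb 2 T with hLdef
      set c : ℝ := 3 * L / m + 1 / ((m:ℝ) * T) with hcdef
      have hTpos : (0:ℝ) < (T:ℝ) := by linarith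
      have hρmpos : (0:ℝ) < ρ ^ m := by positivity
      have hwnn : ∀ j : Fin s, 0 ≤ binWeight P (I j) := by
        intro j
        exact Finset.sum_nonneg (fun x _ => hP0 x)
      have hper : ∀ j : Fin s, bitCost P (Bj j) ≤
          (∑ x ∈ Finset.Icc (I j).1 (I j).2, -(P x * Real.logb 2 (P x)))
            + binWeight P (I j) * c := by
        intro j
        have h5 := hB5 j
        have hIj : ((I j).1, (I j).2) = I j := by rfl
        rw [hIj] at h5
        have hlen : ((((I j).2 - (I j).1 + 1 : ℕ)) : ℝ) ≤ (T:ℝ) := by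
          have : ((I j).2 - (I j).1 + 1 : ℕ) ≤ T := by
            have := hIsub j
            omega
          exact_mod_cast this
        have hterm1 : binWeight P (I j) * Real.logb 2 ρ ≤ binWeight P (I j) * (3 * L / m) :=
          mul_le_mul_of_nonneg_left hlogρ (hwnn j)
        have hterm2 : ((((I j).2 - (I j).1 + 1 : ℕ)) : ℝ) * (binWeight P (I j) / ρ ^ m)
            ≤ binWeight P (I j) * (1 / ((m:ℝ) * T)) := by
          have hq : (0:ℝ) ≤ binWeight P (I j) / ρ ^ m := by
            apply div_nonneg (hwnn j) (le_of_lt hρmpos)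
          calc ((((I j).2 - (I j).1 + 1 : ℕ)) : ℝ) * (binWeight P (I j) / ρ ^ m)
              ≤ (T:ℝ) * (binWeight P (I j) / ρ ^ m) := mul_le_mul_of_nonneg_right hlen hq
            _ = binWeight P (I j) * ((T:ℝ) / ρ ^ m) := by ring
            _ = binWeight P (I j) * (1 / ((m:ℝ) * T)) := by
                rw [hρm]
                congr 1
                field_simp
        calc bitCost P (Bj j) ≤ _ := h5
          _ ≤ (∑ x ∈ Finset.Icc (I j).1 (I j).2, -(P x * Real.logb 2 (P x)))
              + binWeight P (I j) * (3 * L / m) + binWeight P (I j) * (1 / ((m:ℝ) * T)) := by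
            linarith
          _ = (∑ x ∈ Finset.Icc (I j).1 (I j).2, -(P x * Real.logb 2 (P x)))
              + binWeight P (I j) * c := by
            rw [hcdef]; ring
      -- summing entropy and weights over disjoint intervals
      have hIdisjP : (↑(Finset.univ : Finset (Fin s)) : Set (Fin s)).PairwiseDisjoint
          (fun j => Finset.Icc (I j).1 (I j).2) := by
        intro j _ l _ hjl
        exact hIdisj j l hjl
      have hUsub : Finset.univ.biUnion (fun j : Fin s => Finset.Icc (I j).1 (I j).2)
          ⊆ Finset.range T := by
        intro x hx
        rw [Finset.mem_biUnion] at hx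
        obtain ⟨j, _, hj⟩ := hx
        rw [Finset.mem_Icc] at hj
        rw [Finset.mem_range]
        exact lt_of_le_of_lt hj.2 (hIsub j)
      have hPle1 : ∀ x ∈ Finset.range T, P x ≤ 1 := by
        intro x hx
        rw [← hPsum]
        exact Finset.single_le_sum (fun y _ => hP0 y) hx
      have hentnn : ∀ x ∈ Finset.range T, 0 ≤ -(P x * Real.logb 2 (P x)) := by
        intro x hx
        rcases eq_or_lt_of_le (hP0 x) with h0 | h0
        · rw [← h0]; simp
        · have hle : Real.logb 2 (P x) ≤ 0 :=
            Real.logb_nonpos (by norm_num) (hP0 x) (hPle1 x hx)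
          nlinarith
      have hEsum : ∑ j : Fin s, (∑ x ∈ Finset.Icc (I j).1 (I j).2, -(P x * Real.logb 2 (P x)))
          ≤ shannonEntropy P T := by
        rw [← Finset.sum_biUnion hIdisjP, shannonEntropy]
        apply Finset.sum_le_sum_of_subset_of_nonneg hUsub
        intro x hx _
        exact hentnn x hx
      have hWsum : ∑ j : Fin s, binWeight P (I j) ≤ 1 := by
        have : ∑ j : Fin s, binWeight P (I j)
            = ∑ x ∈ Finset.univ.biUnion (fun j : Fin s => Finset.Icc (I j).1 (I j).2), P x := by
          rw [Finset.sum_biUnion hIdisjP]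
          rfl
        rw [this, ← hPsum]
        apply Finset.sum_le_sum_of_subset_of_nonneg hUsub
        intro x _ _
        exact hP0 x
      have hc0 : 0 ≤ c := by
        rw [hcdef]
        have : (0:ℝ) ≤ L := by linarith
        positivity
      have htot : bitCost P B ≤ shannonEntropy P T + c := by
        rw [hcost]
        calc ∑ j : Fin s, bitCost P (Bj j)
            ≤ ∑ j : Fin s, ((∑ x ∈ Finset.Icc (I j).1 (I j).2, -(P x * Real.logb 2 (P x)))
              + binWeight P (I j) * c) := Finset.sum_le_sum (fun j _ => hper j)
          _ = (∑ j : Fin s, (∑ x ∈ Finset.Icc (I j).1 (I j).2, -(P x * Real.logb 2 (P x))))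
              + (∑ j : Fin s, binWeight P (I j)) * c := by
            rw [Finset.sum_add_distrib, Finset.sum_mul]
          _ ≤ shannonEntropy P T + 1 * c := by
            have := mul_le_mul_of_nonneg_right hWsum hc0
            linarith [hEsum]
          _ = shannonEntropy P T + c := by ring
      -- final numerical comparison
      have hT1 : (0:ℝ) < (T:ℝ) - 1 := by linarith
      have e1 : 1 / ((m:ℝ) * T) ≤ 3 * L / ((m:ℝ) * ((T:ℝ) - 1)) := by
        rw [div_le_div_iff₀ (by positivity) (by positivity)]
        have hmt : (0:ℝ) < (m:ℝ) * (T:ℝ) := by positivity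
        nlinarith [mul_le_mul_of_nonneg_right (by linarith : (1:ℝ) ≤ 3 * L) (le_of_lt hmt)]
      have e2 : 3 * L / m + 3 * L / ((m:ℝ) * ((T:ℝ) - 1)) = 3 * L / m * ((T:ℝ) / ((T:ℝ) - 1)) := by
        field_simp
        ring
      have e3 : 3 * L / m * ((T:ℝ) / ((T:ℝ) - 1))
          ≤ 3 * s * L / ((k : ℝ) - 2 * s) * ((T : ℝ) / ((T : ℝ) - 1)) := by
        apply mul_le_mul_of_nonneg_right _ (by positivity)
        rw [div_le_div_iff₀ hmpos hkpos]
        have h0L : (0:ℝ) ≤ 3 * L := by linarith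
        nlinarith [mul_le_mul_of_nonneg_left hkm h0L]
      have : c ≤ 3 * s * L / ((k : ℝ) - 2 * s) * ((T : ℝ) / ((T : ℝ) - 1)) := by
        rw [hcdef]
        calc 3 * L / m + 1 / ((m:ℝ) * T) ≤ 3 * L / m + 3 * L / ((m:ℝ) * ((T:ℝ) - 1)) := by linarith
          _ = 3 * L / m * ((T:ℝ) / ((T:ℝ) - 1)) := e2
          _ ≤ _ := e3
      exact htot.trans (by linarith)
end

section
/- Let T ≥ 2 be a natural number and let P be a PMF on {0,…,T−1} whose PMF is monotone (nondecreasing or nonincreasing) on {0,…,T−1}. Then for every integer k ≥ 2 there exists a binning of P with at most k bins whose bit cost Ĥ satisfies Ĥ − H ≤ (3·log₂(T)/(k−1))·(T/(T−1)), where H is the Shannon entropy of P. -/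
open Finset

/-!
Sort the points by mass into levels: for `j < n` level `j` holds the `x` with
`2^(-c(j+1)) < P x ≤ 2^(-cj)`, where `c = 3 log₂ T / n`, and level `n` holds the rest, of mass at
most `2^(-cn) = T^(-3)`. Monotonicity of `P` makes every level an interval, so the levels are a
binning with `n + 1 = k` bins. On a bin of weight `w` the bit cost exceeds the entropy by at most
`w` times the `log₂` of the ratio of the largest to the smallest mass in it, that is `w c` on the
first `n` levels, and by at most `w log₂ T ≤ T · T^(-3) · log₂ T` on the last. The total excess
`c + log₂ T / T²` is at most `c T / (T - 1)` because `k < T`; when `k ≥ T`, singleton bins have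
no excess at all.
-/
noncomputable def binExcess (P : ℕ → ℝ) (s : Finset ℕ) : ℝ :=
  (∑ x ∈ s, P x) * (Real.logb 2 #s - Real.logb 2 (∑ x ∈ s, P x)) -
    ∑ x ∈ s, -(P x * Real.logb 2 (P x))

section binExcess

variable {P : ℕ → ℝ} {s : Finset ℕ}

theorem binExcess_le_mul_logb_card (hP : ∀ x ∈ s, 0 ≤ P x) :
    binExcess P s ≤ (∑ x ∈ s, P x) * Real.logb 2 #s := by
  have hent : ∑ x ∈ s, P x * Real.logb 2 (P x) ≤ ∑ x ∈ s, P x * Real.logb 2 (∑ y ∈ s, P y) := by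
    refine sum_le_sum fun x hx => ?_
    rcases (hP x hx).eq_or_lt with h0 | hpos
    · simp [← h0]
    · exact mul_le_mul_of_nonneg_left
        (Real.logb_le_logb_of_le one_lt_two hpos (single_le_sum hP hx)) hpos.le
  rw [← sum_mul] at hent
  simp only [binExcess, sum_neg_distrib]
  linarith

theorem binExcess_le_of_forall_mem_Ioc {lo hi : ℝ} (hlo : 0 < lo)
    (hs : ∀ x ∈ s, P x ∈ Set.Ioc lo hi) :
    binExcess P s ≤ (∑ x ∈ s, P x) * Real.logb 2 (hi / lo) := by
  rcases s.eq_empty_or_nonempty with rfl | hne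
  · simp [binExcess]
  have hpos : ∀ x ∈ s, 0 < P x := fun x hx => hlo.trans (hs x hx).1
  have hhi : 0 < hi := (hpos _ hne.choose_spec).trans_le (hs _ hne.choose_spec).2
  have hcard : (0 : ℝ) < #s := by exact_mod_cast hne.card_pos
  have hweight : #s * lo ≤ ∑ x ∈ s, P x := by
    simpa using card_nsmul_le_sum s P lo fun x hx => (hs x hx).1.le
  have hlog_weight : Real.logb 2 #s + Real.logb 2 lo ≤ Real.logb 2 (∑ x ∈ s, P x) := by
    rw [← Real.logb_mul hcard.ne' hlo.ne']
    exact Real.logb_le_logb_of_le one_lt_two (by positivity) hweight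
  have hent : ∑ x ∈ s, P x * Real.logb 2 (P x) ≤ (∑ x ∈ s, P x) * Real.logb 2 hi := by
    rw [sum_mul]
    exact sum_le_sum fun x hx => mul_le_mul_of_nonneg_left
      (Real.logb_le_logb_of_le one_lt_two (hpos x hx) (hs x hx).2) (hpos x hx).le
  have hw : 0 ≤ ∑ x ∈ s, P x := sum_nonneg fun x hx => (hpos x hx).le
  rw [Real.logb_div hhi.ne' hlo.ne']
  simp only [binExcess, sum_neg_distrib]
  nlinarith [mul_le_mul_of_nonneg_left hlog_weight hw]

theorem binExcess_nonpos_of_card_le_one (hP : ∀ x ∈ s, 0 ≤ P x)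
    (hs : #s ≤ 1) : binExcess P s ≤ 0 :=
  (binExcess_le_mul_logb_card hP).trans_eq <| by
    rcases Nat.le_one_iff_eq_zero_or_eq_one.1 hs with h | h <;> simp [h]

theorem binExcess_le_of_forall_mem_Icc {hi : ℝ} {m : ℕ} (hhi : 0 ≤ hi)
    (hs : ∀ x ∈ s, P x ∈ Set.Icc 0 hi) (hcard : #s ≤ m) :
    binExcess P s ≤ m * hi * Real.logb 2 m := by
  have hw : 0 ≤ ∑ x ∈ s, P x := sum_nonneg fun x hx => (hs x hx).1
  have hweight : ∑ x ∈ s, P x ≤ m * hi := calc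
    _ ≤ #s • hi := sum_le_card_nsmul _ _ _ fun x hx => (hs x hx).2
    _ ≤ _ := by rw [nsmul_eq_mul]; gcongr
  have hlog_m : 0 ≤ Real.logb 2 m := by
    rcases m.eq_zero_or_pos with rfl | hm
    · simp
    · exact Real.logb_nonneg one_lt_two (by exact_mod_cast hm)
  have hlog : Real.logb 2 #s ≤ Real.logb 2 m := by
    rcases Nat.eq_zero_or_pos #s with h | h
    · rw [h, Nat.cast_zero, Real.logb_zero]; exact hlog_m
    · exact Real.logb_le_logb_of_le one_lt_two (by exact_mod_cast h) (by exact_mod_cast hcard)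
  calc binExcess P s ≤ (∑ x ∈ s, P x) * Real.logb 2 #s :=
        binExcess_le_mul_logb_card fun x hx => (hs x hx).1
    _ ≤ (∑ x ∈ s, P x) * Real.logb 2 m := by gcongr
    _ ≤ _ := by gcongr

end binExcess

theorem Finset.Icc_min'_max'_eq_of_ordConnected {α : Type*} [LinearOrder α] [LocallyFiniteOrder α]
    {s : Finset α} (hs : (s : Set α).OrdConnected) (hne : s.Nonempty) :
    Icc (s.min' hne) (s.max' hne) = s := by
  ext x
  rw [mem_Icc]
  exact ⟨fun hx => hs.out (s.min'_mem hne) (s.max'_mem hne) hx,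
    fun hx => ⟨s.min'_le x hx, s.le_max' x hx⟩⟩

theorem ordConnected_filter_eq_of_monotoneOn_or_antitoneOn {α β : Type*} [Preorder α]
    [PartialOrder β] [DecidableEq β] {s : Finset α} {g : α → β}
    (hs : (s : Set α).OrdConnected) (hg : MonotoneOn g s ∨ AntitoneOn g s) (j : β) :
    (↑{x ∈ s | g x = j} : Set α).OrdConnected := by
  refine ⟨fun a ha b hb x hx => ?_⟩
  simp only [coe_filter, Set.mem_ofPred_eq] at ha hb ⊢
  have hxs : x ∈ s := hs.out ha.1 hb.1 hx
  refine ⟨hxs, ?_⟩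
  rcases hg with hg | hg
  · exact le_antisymm (hb.2 ▸ hg hxs hb.1 hx.2) (ha.2 ▸ hg ha.1 hxs hx.1)
  · exact le_antisymm (ha.2 ▸ hg ha.1 hxs hx.1) (hb.2 ▸ hg hxs hb.1 hx.2)

theorem bitCost_eq_sum_Icc (P : ℕ → ℝ) {B : Finset (ℕ × ℕ)} (hB : ∀ p ∈ B, p.1 ≤ p.2) :
    bitCost P B = ∑ p ∈ B, (∑ x ∈ Icc p.1 p.2, P x) *
      (Real.logb 2 #(Icc p.1 p.2) - Real.logb 2 (∑ x ∈ Icc p.1 p.2, P x)) :=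
  sum_congr rfl fun p hp => by
    rw [Nat.card_Icc, show p.2 + 1 - p.1 = p.2 - p.1 + 1 by have := hB p hp; omega]
    rfl

theorem isBinning_image_of_Icc_eq_fiber (P : ℕ → ℝ) {T : ℕ} {g : ℕ → ℕ} {bin : ℕ → ℕ × ℕ}
    (hbin : ∀ j ∈ (range T).image g, Icc (bin j).1 (bin j).2 = {x ∈ range T | g x = j}) :
    IsBinning P T (((range T).image g).image bin) := by
  have hfiber : ∀ x < T, Icc (bin (g x)).1 (bin (g x)).2 = {y ∈ range T | g y = g x} :=
    fun x hx => hbin _ (mem_image_of_mem g (mem_range.2 hx))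
  have hmem : ∀ x < T, x ∈ Icc (bin (g x)).1 (bin (g x)).2 := fun x hx => by
    rw [hfiber x hx, mem_filter, mem_range]; exact ⟨hx, rfl⟩
  refine ⟨?_, ?_, fun x hx _ => ⟨_, mem_image_of_mem _ (mem_image_of_mem _ (mem_range.2 hx)),
    hmem x hx⟩⟩
  · simp only [forall_mem_image, mem_range]
    intro x hx
    have hle := (mem_Icc.1 (hmem x hx)).1.trans (mem_Icc.1 (hmem x hx)).2
    have hright := right_mem_Icc.2 hle
    rw [hfiber x hx, mem_filter, mem_range] at hright
    exact ⟨hle, hright.1⟩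
  · simp only [forall_mem_image, mem_range]
    intro x hx y hy hxy
    rw [hfiber x hx, hfiber y hy, disjoint_filter]
    exact fun z _ hzx hzy => hxy (by rw [← hzx, hzy])

theorem exists_binning_of_ordConnected_fibers (P : ℕ → ℝ) (T k : ℕ) (g : ℕ → ℕ)
    (hgk : ∀ x < T, g x < k) (hconn : ∀ j, (↑{x ∈ range T | g x = j} : Set ℕ).OrdConnected) :
    ∃ B : Finset (ℕ × ℕ), IsBinning P T B ∧ #B ≤ k ∧
      bitCost P B - shannonEntropy P T = ∑ j ∈ range k, binExcess P {x ∈ range T | g x = j} := by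
  set F : ℕ → Finset ℕ := fun j => {x ∈ range T | g x = j}
  set J := (range T).image g with hJ
  have hJk : J ⊆ range k := image_subset_iff.2 fun x hx => mem_range.2 (hgk x (mem_range.1 hx))
  have hJF : ∀ j ∈ J, (F j).Nonempty := by
    simp only [hJ, mem_image]
    rintro _ ⟨x, hx, rfl⟩
    exact ⟨x, mem_filter.2 ⟨hx, rfl⟩⟩
  have hbin : ∀ j ∈ J, ∃ p : ℕ × ℕ, Icc p.1 p.2 = F j := fun j hj =>
    ⟨((F j).min' (hJF j hj), (F j).max' (hJF j hj)),
      Icc_min'_max'_eq_of_ordConnected (hconn j) (hJF j hj)⟩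
  choose! bin hbin using hbin
  have hle : ∀ j ∈ J, (bin j).1 ≤ (bin j).2 := fun j hj => nonempty_Icc.1 (hbin j hj ▸ hJF j hj)
  have hinj : Set.InjOn bin J := fun i hi j hj hij => by
    obtain ⟨x, hx⟩ := hJF i hi
    have hxj : x ∈ F j := by rw [← hbin j hj, ← hij, hbin i hi]; exact hx
    exact (mem_filter.1 hx).2.symm.trans (mem_filter.1 hxj).2
  refine ⟨J.image bin, isBinning_image_of_Icc_eq_fiber P hbin,
    card_image_le.trans ((card_le_card hJk).trans (card_range k).le), ?_⟩
  have hcost : bitCost P (J.image bin) = ∑ j ∈ J,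
      (∑ x ∈ F j, P x) * (Real.logb 2 #(F j) - Real.logb 2 (∑ x ∈ F j, P x)) := by
    rw [bitCost_eq_sum_Icc P (forall_mem_image.2 hle), sum_image hinj]
    exact sum_congr rfl fun j hj => by rw [hbin j hj]
  have hentropy : shannonEntropy P T = ∑ j ∈ J, ∑ x ∈ F j, -(P x * Real.logb 2 (P x)) :=
    (sum_fiberwise_of_maps_to (fun x hx => mem_image_of_mem g hx) _).symm
  rw [hcost, hentropy, ← sum_sub_distrib]
  refine sum_subset hJk fun j _ hj => ?_
  have hempty : F j = ∅ := eq_empty_of_forall_notMem fun x hx =>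
    hj ((mem_filter.1 hx).2 ▸ mem_image_of_mem g (mem_filter.1 hx).1)
  simp [hempty]

/-- The level `j ≤ n` with `2^(-c(j+1)) < p ≤ 2^(-cj)`, all lower levels merged into `n`. The
mass `0` is sent to level `n` explicitly, since `logb 2 0 = 0` would put it in level `0`. -/
noncomputable def massLevel (c : ℝ) (n : ℕ) (p : ℝ) : ℕ :=
  if p = 0 then n else min n ⌊-Real.logb 2 p / c⌋₊

section massLevel

variable {c : ℝ} {n : ℕ} {p : ℝ}

theorem massLevel_le : massLevel c n p ≤ n := by
  unfold massLevel
  split_ifs <;> omega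

theorem antitoneOn_massLevel (hc : 0 ≤ c) : AntitoneOn (massLevel c n) (Set.Ici 0) := by
  intro p hp q _ hpq
  rcases (Set.mem_Ici.1 hp).eq_or_lt with rfl | hpos
  · simp only [massLevel, if_pos]
    exact massLevel_le
  have hq : q ≠ 0 := (hpos.trans_le hpq).ne'
  simp only [massLevel, if_neg hq, if_neg hpos.ne']
  exact min_le_min_left _ <| Nat.floor_le_floor <| div_le_div_of_nonneg_right
    (neg_le_neg (Real.logb_le_logb_of_le one_lt_two hpos hpq)) hc

theorem mem_Ioc_of_massLevel_lt (hc : 0 < c) (hp : 0 ≤ p) (hp1 : p ≤ 1) (h : massLevel c n p < n) :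
    p ∈ Set.Ioc ((2 : ℝ) ^ (-(c * (massLevel c n p + 1))))
      ((2 : ℝ) ^ (-(c * massLevel c n p))) := by
  have hp0 : p ≠ 0 := by rintro rfl; simp [massLevel] at h
  have hpos : 0 < p := hp.lt_of_ne' hp0
  have hfloor : massLevel c n p = ⌊-Real.logb 2 p / c⌋₊ := by
    simp only [massLevel, if_neg hp0] at h ⊢; omega
  have hlog : 0 ≤ -Real.logb 2 p / c :=
    div_nonneg (neg_nonneg.2 (Real.logb_nonpos one_lt_two hp hp1)) hc.le
  obtain ⟨hlo, hhi⟩ := (Nat.floor_eq_iff hlog).1 hfloor.symm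
  rw [le_div_iff₀ hc] at hlo
  rw [div_lt_iff₀ hc] at hhi
  constructor
  · rw [← Real.lt_logb_iff_rpow_lt one_lt_two hpos]; linarith
  · rw [← Real.logb_le_iff_le_rpow one_lt_two hpos]; linarith

theorem le_rpow_of_massLevel_eq (hc : 0 < c) (hp : 0 ≤ p) (hp1 : p ≤ 1) (h : massLevel c n p = n) :
    p ≤ (2 : ℝ) ^ (-(c * n)) := by
  rcases hp.eq_or_lt with rfl | hpos
  · positivity
  have hlog : 0 ≤ -Real.logb 2 p / c :=
    div_nonneg (neg_nonneg.2 (Real.logb_nonpos one_lt_two hp hp1)) hc.le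
  simp only [massLevel, if_neg hpos.ne', min_eq_left_iff, Nat.le_floor_iff hlog,
    le_div_iff₀ hc] at h
  rw [← Real.logb_le_iff_le_rpow one_lt_two hpos]
  linarith

end massLevel

theorem sum_binExcess_massLevel_le (P : ℕ → ℝ) (T n : ℕ) {c : ℝ} (hc : 0 < c)
    (hP0 : ∀ x, 0 ≤ P x) (hPsum : ∑ x ∈ range T, P x = 1) :
    ∑ j ∈ range (n + 1), binExcess P {x ∈ range T | massLevel c n (P x) = j} ≤
      c + T * 2 ^ (-(c * n)) * Real.logb 2 T := by
  set F : ℕ → Finset ℕ := fun j => {x ∈ range T | massLevel c n (P x) = j}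
  have hP1 : ∀ x ∈ range T, P x ≤ 1 := fun x hx => hPsum ▸ single_le_sum (fun y _ => hP0 y) hx
  have hweights : ∑ j ∈ range (n + 1), ∑ x ∈ F j, P x = 1 :=
    hPsum ▸ sum_fiberwise_of_maps_to (fun x _ => mem_range.2 (Nat.lt_succ_of_le massLevel_le)) P
  have hlow : ∀ j ∈ range n, binExcess P (F j) ≤ (∑ x ∈ F j, P x) * c := by
    intro j hj
    have hbound := binExcess_le_of_forall_mem_Ioc (P := P) (s := F j)
      (lo := 2 ^ (-(c * (j + 1)))) (hi := 2 ^ (-(c * j))) (by positivity) fun x hx => by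
        obtain ⟨hxT, rfl⟩ := mem_filter.1 hx
        exact mem_Ioc_of_massLevel_lt hc (hP0 x) (hP1 x hxT) (mem_range.1 hj)
    rwa [← Real.rpow_sub two_pos, Real.logb_rpow two_pos (by norm_num),
      show -(c * j) - -(c * (j + 1)) = c by ring] at hbound
  have hlast : binExcess P (F n) ≤ T * 2 ^ (-(c * n)) * Real.logb 2 T :=
    binExcess_le_of_forall_mem_Icc (by positivity)
      (fun x hx => ⟨hP0 x, le_rpow_of_massLevel_eq hc (hP0 x) (hP1 x (mem_filter.1 hx).1)
        (mem_filter.1 hx).2⟩)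
      ((card_filter_le _ _).trans (card_range T).le)
  have hlow_weights : ∑ j ∈ range n, ∑ x ∈ F j, P x ≤ 1 := hweights ▸
    sum_le_sum_of_subset_of_nonneg (range_subset_range.2 n.le_succ) fun j _ _ =>
      sum_nonneg fun x _ => hP0 x
  calc ∑ j ∈ range (n + 1), binExcess P (F j)
      = ∑ j ∈ range n, binExcess P (F j) + binExcess P (F n) := sum_range_succ _ _
    _ ≤ ∑ j ∈ range n, (∑ x ∈ F j, P x) * c + T * 2 ^ (-(c * n)) * Real.logb 2 T :=
        add_le_add (sum_le_sum hlow) hlast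
    _ ≤ c + T * 2 ^ (-(c * n)) * Real.logb 2 T := by
        rw [← sum_mul]; gcongr; exact (mul_le_of_le_one_left hc.le hlow_weights)

theorem exists_binning_bitCost_sub_shannonEntropy_nonpos (P : ℕ → ℝ) {T k : ℕ} (hTk : T ≤ k)
    (hP0 : ∀ x, 0 ≤ P x) :
    ∃ B : Finset (ℕ × ℕ), IsBinning P T B ∧ #B ≤ k ∧ bitCost P B - shannonEntropy P T ≤ 0 := by
  have hrange : (↑(range T) : Set ℕ).OrdConnected := by rw [coe_range]; exact Set.ordConnected_Iio
  obtain ⟨B, hB, hcard, hcost⟩ := exists_binning_of_ordConnected_fibers P T k id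
    (fun x hx => hx.trans_le hTk)
    (ordConnected_filter_eq_of_monotoneOn_or_antitoneOn hrange (Or.inl monotoneOn_id))
  refine ⟨B, hB, hcard, hcost ▸ sum_nonpos fun j _ => ?_⟩
  refine binExcess_nonpos_of_card_le_one (fun x _ => hP0 x) (card_le_one.2 fun a ha b hb => ?_)
  exact (mem_filter.1 ha).2.trans (mem_filter.1 hb).2.symm

theorem exists_binning_bitCost_sub_shannonEntropy_le (P : ℕ → ℝ) (T n : ℕ) {c : ℝ} (hc : 0 < c)
    (hP0 : ∀ x, 0 ≤ P x) (hPsum : ∑ x ∈ range T, P x = 1)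
    (hPmono : MonotoneOn P ↑(range T) ∨ AntitoneOn P ↑(range T)) :
    ∃ B : Finset (ℕ × ℕ), IsBinning P T B ∧ #B ≤ n + 1 ∧
      bitCost P B - shannonEntropy P T ≤ c + T * 2 ^ (-(c * n)) * Real.logb 2 T := by
  have hrange : (↑(range T) : Set ℕ).OrdConnected := by rw [coe_range]; exact Set.ordConnected_Iio
  have hlevel := antitoneOn_massLevel (n := n) hc.le
  obtain ⟨B, hB, hcard, hcost⟩ := exists_binning_of_ordConnected_fibers P T (n + 1)
    (fun x => massLevel c n (P x)) (fun x _ => Nat.lt_succ_of_le massLevel_le)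
    (ordConnected_filter_eq_of_monotoneOn_or_antitoneOn hrange <| hPmono.symm.imp
      (fun h => hlevel.comp h fun x _ => hP0 x)
      (fun h => hlevel.comp_MonotoneOn h fun x _ => hP0 x))
  exact ⟨B, hB, hcard, hcost ▸ sum_binExcess_massLevel_le P T n hc hP0 hPsum⟩

theorem three_logb_div_add_le_mul_div_sub_one {T m : ℝ} (hT : 1 < T) (hm : 0 < m)
    (hmT : m ≤ 3 * T) :
    3 * Real.logb 2 T / m + T * 2 ^ (-(3 * Real.logb 2 T / m * m)) * Real.logb 2 T ≤
      3 * Real.logb 2 T / m * (T / (T - 1)) := by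
  have hlog : 0 ≤ Real.logb 2 T := Real.logb_nonneg one_lt_two hT.le
  have hrpow : (2 : ℝ) ^ (-(3 * Real.logb 2 T / m * m)) = (T ^ 3)⁻¹ := by
    rw [div_mul_cancel₀ _ hm.ne', mul_comm, Real.rpow_neg zero_le_two, Real.rpow_mul zero_le_two,
      Real.rpow_logb two_pos (by norm_num) (by linarith), show (3 : ℝ) = (3 : ℕ) by norm_num,
      Real.rpow_natCast]
  have hT1 : 0 < T - 1 := by linarith
  have hgap : 3 * Real.logb 2 T / m * (T / (T - 1)) -
      (3 * Real.logb 2 T / m + T * (T ^ 3)⁻¹ * Real.logb 2 T) =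
        Real.logb 2 T * (3 * T ^ 2 - m * (T - 1)) / (m * (T - 1) * T ^ 2) := by
    field_simp
    ring
  rw [hrpow, ← sub_nonneg, hgap]
  exact div_nonneg (mul_nonneg hlog (by nlinarith)) (by positivity)

/-- **Lemma 2 of the paper.** If `P` is a monotone PMF on `{0, …, T−1}` with `T ≥ 2`, then
for any `k ≥ 2` there is a binning with at most `k` bins whose bit cost `Ĥ` satisfies
`Ĥ − H ≤ (3 log₂ T / (k − 1)) · (T / (T − 1))`. -/
theorem monotone_pmf_binning_bit_cost_bound
    (T k : ℕ) (hT : 2 ≤ T) (hk : 2 ≤ k)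
    (P : ℕ → ℝ) (hP0 : ∀ x, 0 ≤ P x) (hPsum : ∑ x ∈ Finset.range T, P x = 1)
    (hmono : (∀ x y, x ≤ y → y < T → P x ≤ P y) ∨ (∀ x y, x ≤ y → y < T → P y ≤ P x)) :
    ∃ B : Finset (ℕ × ℕ), IsBinning P T B ∧ B.card ≤ k ∧
      bitCost P B - shannonEntropy P T ≤
        3 * Real.logb 2 T / ((k : ℝ) - 1) * ((T : ℝ) / ((T : ℝ) - 1)) := by
  have hT1 : (1 : ℝ) < T := by exact_mod_cast hT
  have hk1 : (1 : ℝ) < k := by exact_mod_cast hk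
  have hlogT : 0 < Real.logb 2 T := Real.logb_pos one_lt_two hT1
  rcases le_or_gt T k with hTk | hkT
  · obtain ⟨B, hB, hcard, hcost⟩ := exists_binning_bitCost_sub_shannonEntropy_nonpos P hTk hP0
    refine ⟨B, hB, hcard, hcost.trans ?_⟩
    exact mul_nonneg (div_nonneg (by linarith) (by linarith))
      (div_nonneg (by linarith) (by linarith))
  · have hn : ((k - 1 : ℕ) : ℝ) = k - 1 := Nat.cast_pred (by omega)
    have hkT' : (k : ℝ) < T := by exact_mod_cast hkT
    obtain ⟨B, hB, hcard, hcost⟩ := exists_binning_bitCost_sub_shannonEntropy_le P T (k - 1)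
      (c := 3 * Real.logb 2 T / (k - 1 : ℕ)) (by rw [hn]; exact div_pos (by linarith) (by linarith))
      hP0 hPsum (hmono.imp (fun h x _ y hy hxy => h x y hxy (mem_range.1 hy))
        (fun h x _ y hy hxy => h x y hxy (mem_range.1 hy)))
    refine ⟨B, hB, hcard.trans (by omega), hcost.trans ?_⟩
    rw [← hn]
    exact three_logb_div_add_le_mul_div_sub_one hT1 (by linarith) (by linarith)
end

section
/- Let T ≥ 1 be a natural number, let P be a PMF on {0,…,T−1}, and let B be any binning of P. Then the bit cost of B satisfies Ĥ ≥ H, where H is the Shannon entropy of P. In other words, the Shannon entropy is a lower bound on the binned bit cost for every choice of bins. -/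
open Finset

/-!
Within a single bin of length `n` and weight `w`, concavity of `x ↦ -x log x` (Jensen with the
uniform weights `1/n`) bounds the entropy contribution of the bin by that of the uniform
distribution of mass `w` on the bin, which is `w (log n - log w)`. Summing over the disjoint
bins, which cover the support of `P`, gives the theorem.
-/

open Real

theorem Real.sum_negMulLog_le {ι : Type*} (s : Finset ι) (p : ι → ℝ) (hp : ∀ i ∈ s, 0 ≤ p i) :
    ∑ i ∈ s, negMulLog (p i) ≤ (∑ i ∈ s, p i) * (log #s - log (∑ i ∈ s, p i)) := by
  rcases s.eq_empty_or_nonempty with rfl | hs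
  · simp
  set w := ∑ i ∈ s, p i
  have hn : (0 : ℝ) < #s := by exact_mod_cast hs.card_pos
  have hjensen :
      ∑ i ∈ s, (#s : ℝ)⁻¹ * negMulLog (p i) ≤ negMulLog (∑ i ∈ s, (#s : ℝ)⁻¹ * p i) :=
    concaveOn_negMulLog.le_map_sum (fun _ _ => by positivity)
      (by simp [sum_const, hn.ne']) (fun i hi => Set.mem_Ici.mpr (hp i hi))
  rw [← mul_sum, ← mul_sum, negMulLog_mul, negMulLog, negMulLog, log_inv] at hjensen
  have hscaled : (#s : ℝ)⁻¹ * ∑ i ∈ s, negMulLog (p i) ≤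
      (#s : ℝ)⁻¹ * (w * (log #s - log w)) := by
    linarith
  exact le_of_mul_le_mul_left hscaled (inv_pos.mpr hn)

theorem Real.sum_neg_mul_logb_le {ι : Type*} {b : ℝ} (hb : 1 < b) (s : Finset ι) (p : ι → ℝ)
    (hp : ∀ i ∈ s, 0 ≤ p i) :
    ∑ i ∈ s, -(p i * logb b (p i)) ≤
      (∑ i ∈ s, p i) * (logb b #s - logb b (∑ i ∈ s, p i)) := by
  have hterm : ∀ i, -(p i * logb b (p i)) = negMulLog (p i) / log b := fun i => by
    rw [negMulLog, logb]; ring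
  rw [sum_congr rfl fun i _ => hterm i, ← sum_div, logb, logb, ← sub_div, ← mul_div_assoc]
  exact div_le_div_of_nonneg_right (sum_negMulLog_le s p hp) (log_pos hb).le

theorem sum_Icc_neg_mul_logb_le_binWeight_mul {P : ℕ → ℝ} (hP0 : ∀ x, 0 ≤ P x) {p : ℕ × ℕ}
    (hp : p.1 ≤ p.2) :
    ∑ x ∈ Icc p.1 p.2, -(P x * logb 2 (P x)) ≤
      binWeight P p * (logb 2 ((p.2 - p.1 + 1 : ℕ) : ℝ) - logb 2 (binWeight P p)) := by
  have hcard : #(Icc p.1 p.2) = p.2 - p.1 + 1 := by rw [Nat.card_Icc]; omega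
  simpa only [binWeight, hcard] using
    sum_neg_mul_logb_le one_lt_two (Icc p.1 p.2) P fun x _ => hP0 x

theorem IsBinning.sum_range_eq_sum_sum_Icc {M : Type*} [AddCommMonoid M] {P : ℕ → ℝ} {T : ℕ}
    {B : Finset (ℕ × ℕ)} (hB : IsBinning P T B) (g : ℕ → M) (hg : ∀ x, P x = 0 → g x = 0) :
    ∑ x ∈ range T, g x = ∑ p ∈ B, ∑ x ∈ Icc p.1 p.2, g x := by
  obtain ⟨hbounds, hdisj, hcover⟩ := hB
  rw [← sum_biUnion hdisj]
  refine (sum_subset ?_ fun x hx hxB => hg x ?_).symm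
  · intro x hx
    obtain ⟨p, hp, hxp⟩ := mem_biUnion.mp hx
    exact mem_range.mpr ((mem_Icc.mp hxp).2.trans_lt (hbounds p hp).2)
  · by_contra hPx
    obtain ⟨p, hp, hxp⟩ := hcover x (mem_range.mp hx) hPx
    exact hxB (mem_biUnion.mpr ⟨p, hp, hxp⟩)

theorem bitCost_ge_entropy_general
    (T : ℕ)
    (P : ℕ → ℝ) (hP0 : ∀ x, 0 ≤ P x)
    (B : Finset (ℕ × ℕ)) (hB : IsBinning P T B) :
    bitCost P B ≥ shannonEntropy P T := by
  have hsplit := hB.sum_range_eq_sum_sum_Icc (fun x => -(P x * logb 2 (P x)))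
    fun x hx => by simp [hx]
  rw [shannonEntropy, hsplit]
  exact sum_le_sum fun p hp => sum_Icc_neg_mul_logb_le_binWeight_mul hP0 (hB.1 p hp).1

/-- The Shannon entropy is a lower bound on the binned bit cost, for every binning. -/
theorem bitCost_ge_entropy
    (T : ℕ) (hT : 1 ≤ T)
    (P : ℕ → ℝ) (hP0 : ∀ x, 0 ≤ P x) (hPsum : ∑ x ∈ Finset.range T, P x = 1)
    (B : Finset (ℕ × ℕ)) (hB : IsBinning P T B) :
    bitCost P B ≥ shannonEntropy P T :=
  bitCost_ge_entropy_general T P hP0 B hB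
end

section
/- Let T ≥ 1 and s ≥ 1 be natural numbers, let P_1,…,P_s be PMFs on {0,…,T−1} with pairwise disjoint supports, let u_1,…,u_s be positive reals with Σ_j u_j = 1, and let P = Σ_j u_j P_j. For each j, let B_j be a binning of P_j such that every bin of B_j is disjoint from the support of P_l for every l ≠ j, and let B be the union of the B_j (so B is a binning of P). Then the bit cost of B with respect to P satisfies Ĥ_P(B) = Σ_{j=1}^{s} u_j·(Ĥ_{P_j}(B_j) − log₂(u_j)), where Ĥ_{P_j}(B_j) is the bit cost of B_j with respect to P_j. -/
open Finset

/-- Sum over a biUnion splits as an iterated sum when `f` vanishes on overlaps. -/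
lemma sum_biUnion_of_zero_on_inter {ι : Type*} [DecidableEq ι] (f : ℕ × ℕ → ℝ)
    (B : ι → Finset (ℕ × ℕ)) (t : Finset ι)
    (h : ∀ j ∈ t, ∀ l ∈ t, j ≠ l → ∀ p ∈ B j, p ∈ B l → f p = 0) :
    ∑ p ∈ t.biUnion B, f p = ∑ j ∈ t, ∑ p ∈ B j, f p := by
  induction t using Finset.induction_on with
  | empty => simp
  | @insert a t ha ih =>
    rw [Finset.biUnion_insert, Finset.sum_insert ha]
    have hinter : ∑ p ∈ B a ∩ t.biUnion B, f p = 0 := by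
      apply Finset.sum_eq_zero
      intro p hp
      rw [Finset.mem_inter, Finset.mem_biUnion] at hp
      obtain ⟨hpa, j, hjt, hpj⟩ := hp
      exact h a (Finset.mem_insert_self a t) j (Finset.mem_insert_of_mem hjt)
        (fun e => ha (e ▸ hjt)) p hpa hpj
    have := Finset.sum_union_inter (s₁ := B a) (s₂ := t.biUnion B) (f := f)
    rw [hinter, add_zero] at this
    rw [this, ih]
    intro j hj l hl hjl p hpj hpl
    exact h j (Finset.mem_insert_of_mem hj) l (Finset.mem_insert_of_mem hl) hjl p hpj hpl

/-- Bit cost of the union of per-component binnings of a mixture with disjoint supports: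
`Ĥ_P(B) = Σ_j u_j (Ĥ_{P_j}(B_j) − log₂ u_j)`. -/
theorem bitCost_of_disjoint_mixture
    (T s : ℕ) (hT : 1 ≤ T) (hs : 1 ≤ s)
    (P : Fin s → ℕ → ℝ)
    (hP0 : ∀ j x, 0 ≤ P j x)
    (hPsum : ∀ j, ∑ x ∈ Finset.range T, P j x = 1)
    (hdisj : ∀ j l, j ≠ l → ∀ x < T, P j x ≠ 0 → P l x = 0)
    (u : Fin s → ℝ) (hu : ∀ j, 0 < u j) (husum : ∑ j, u j = 1)
    (B : Fin s → Finset (ℕ × ℕ))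
    (hB : ∀ j, IsBinning (P j) T (B j))
    (hBdisj : ∀ j, ∀ p ∈ B j, ∀ l, l ≠ j → ∀ x ∈ Finset.Icc p.1 p.2, P l x = 0) :
    bitCost (fun x => ∑ j, u j * P j x) (Finset.biUnion Finset.univ B) =
      ∑ j, u j * (bitCost (P j) (B j) - Real.logb 2 (u j)) := by
  classical
  set Pm : ℕ → ℝ := fun x => ∑ j, u j * P j x with hPm
  set f : ℕ × ℕ → ℝ := fun p => binWeight Pm p *
    (Real.logb 2 ((p.2 - p.1 + 1 : ℕ) : ℝ) - Real.logb 2 (binWeight Pm p)) with hf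
  -- weight of a bin of B j under the mixture
  have hw : ∀ j, ∀ p ∈ B j, binWeight Pm p = u j * binWeight (P j) p := by
    intro j p hp
    unfold binWeight
    rw [Finset.sum_comm]
    rw [Finset.sum_eq_single j]
    · rw [Finset.mul_sum]
    · intro l _ hl
      have : ∀ x ∈ Finset.Icc p.1 p.2, u l * P l x = 0 := by
        intro x hx
        rw [hBdisj j p hp l hl x hx, mul_zero]
      exact Finset.sum_eq_zero this
    · intro h; exact absurd (Finset.mem_univ j) h
  -- overlapping bins have zero mixture weight
  have hzero : ∀ j ∈ (Finset.univ : Finset (Fin s)), ∀ l ∈ (Finset.univ : Finset (Fin s)),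
      j ≠ l → ∀ p ∈ B j, p ∈ B l → f p = 0 := by
    intro j _ l _ hjl p hpj hpl
    have hwj : binWeight (P j) p = 0 := by
      unfold binWeight
      exact Finset.sum_eq_zero (fun x hx => hBdisj l p hpl j hjl x hx)
    have : binWeight Pm p = 0 := by rw [hw j p hpj, hwj, mul_zero]
    simp [hf, this]
  have hsplit := sum_biUnion_of_zero_on_inter f B Finset.univ hzero
  show ∑ p ∈ Finset.biUnion Finset.univ B, f p = _
  rw [hsplit]
  apply Finset.sum_congr rfl
  intro j _
  -- total weight of B j is 1
  have hwsum : ∑ p ∈ B j, binWeight (P j) p = 1 := by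
    obtain ⟨hb1, hb2, hb3⟩ := hB j
    have : ∑ p ∈ B j, binWeight (P j) p
        = ∑ x ∈ (B j).biUnion (fun p => Finset.Icc p.1 p.2), P j x :=
      (Finset.sum_biUnion (fun p hp q hq hpq => hb2 p hp q hq hpq)).symm
    rw [this, ← hPsum j]
    apply Finset.sum_subset
    · intro x hx
      rw [Finset.mem_biUnion] at hx
      obtain ⟨p, hp, hxp⟩ := hx
      rw [Finset.mem_Icc] at hxp
      exact Finset.mem_range.mpr (lt_of_le_of_lt hxp.2 (hb1 p hp).2)
    · intro x hx hnx
      by_contra hne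
      obtain ⟨p, hp, hxp⟩ := hb3 x (Finset.mem_range.mp hx) hne
      exact hnx (Finset.mem_biUnion.mpr ⟨p, hp, hxp⟩)
  -- per-bin identity
  have hperbin : ∀ p ∈ B j, f p =
      u j * (binWeight (P j) p *
        (Real.logb 2 ((p.2 - p.1 + 1 : ℕ) : ℝ) - Real.logb 2 (binWeight (P j) p)))
      - u j * Real.logb 2 (u j) * binWeight (P j) p := by
    intro p hp
    have hwp : binWeight Pm p = u j * binWeight (P j) p := hw j p hp
    set w := binWeight (P j) p with hwdef
    have hw0 : 0 ≤ w := Finset.sum_nonneg (fun x _ => hP0 j x)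
    rcases eq_or_lt_of_le hw0 with h0 | h0
    · simp [hf, hwp, ← h0]
    · have hlog : Real.logb 2 (u j * w) = Real.logb 2 (u j) + Real.logb 2 w :=
        Real.logb_mul (ne_of_gt (hu j)) (ne_of_gt h0)
      rw [hf]
      simp only [hwp, hlog]
      ring
  rw [Finset.sum_congr rfl hperbin, Finset.sum_sub_distrib, ← Finset.mul_sum,
    ← Finset.mul_sum, hwsum, mul_one]
  unfold bitCost
  ring
end

section
/- Let T ≥ 2 be a natural number, let P : {0,…,T−1} → ℝ be nonnegative and monotone nondecreasing, and let [a_1,b_1],…,[a_r,b_r] be consecutive adjacent intervals in {0,…,T−1} (i.e., a_{i+1} = b_i + 1 for all i, and a_i ≤ b_i) with a_1 ≥ 1. Set w_i = Σ_{x=a_i}^{b_i} P(x), T_i = b_i − a_i + 1, q_i = P(b_i) for 1 ≤ i ≤ r, and q_0 = P(a_1 − 1). Assume q_0 > 0 and that w_i ≤ c for all i, where c > 0. Then Σ_{i=1}^{r} w_i·(log₂(T_i) − log₂(w_i) + log₂(q_i)) ≤ c·(log₂(q_r) − log₂(q_0)). -/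
open Finset

/-- Telescoping bound on the excess bit cost of the "deep" bins: for consecutive adjacent
bins `[a i, b i]` (with `a (i+1) = b i + 1`) of a nonnegative, monotone nondecreasing `P`
on `{0, …, T−1}`, with weights `w i ≤ c` and `P (a 0 − 1) > 0`,
`Σ_i w_i (log₂ T_i − log₂ w_i + log₂ q_i) ≤ c (log₂ q_r − log₂ q_0)`
where `q_i = P (b i)` and `q_0 = P (a 0 − 1)`. -/
theorem deep_bins_telescoping_bound
    (T : ℕ) (hT : 2 ≤ T)
    (P : ℕ → ℝ) (hP0 : ∀ x, 0 ≤ P x)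
    (hmono : ∀ x y, x ≤ y → y < T → P x ≤ P y)
    (r : ℕ) (hr : 1 ≤ r) (a b : ℕ → ℕ)
    (hab : ∀ i < r, a i ≤ b i)
    (hadj : ∀ i, i + 1 < r → a (i + 1) = b i + 1)
    (ha0 : 1 ≤ a 0) (hbT : b (r - 1) ≤ T - 1)
    (c : ℝ) (hc : 0 < c)
    (hw : ∀ i < r, (∑ x ∈ Finset.Icc (a i) (b i), P x) ≤ c)
    (hq0 : 0 < P (a 0 - 1)) :
    ∑ i ∈ Finset.range r, (∑ x ∈ Finset.Icc (a i) (b i), P x) *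
        (Real.logb 2 ((b i - a i + 1 : ℕ) : ℝ) -
          Real.logb 2 (∑ x ∈ Finset.Icc (a i) (b i), P x) + Real.logb 2 (P (b i))) ≤
      c * (Real.logb 2 (P (b (r - 1))) - Real.logb 2 (P (a 0 - 1))) := by
  -- b is monotone along the bins
  have hbmono : ∀ j, j < r → ∀ i, i ≤ j → b i ≤ b j := by
    intro j
    induction j with
    | zero => intro _ i hi; interval_cases i; rfl
    | succ n ih =>
      intro hj i hi
      rcases Nat.eq_or_lt_of_le hi with h | h
      · subst h; rfl
      · have h1 : b i ≤ b n := ih (by omega) i (by omega)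
        have h2 : a (n + 1) = b n + 1 := hadj n hj
        have h3 : a (n + 1) ≤ b (n + 1) := hab (n + 1) hj
        omega
  have hbT' : ∀ i, i < r → b i < T := by
    intro i hi
    have := hbmono (r - 1) (by omega) i (by omega)
    omega
  set Q : ℕ → ℝ := fun i => if i = 0 then P (a 0 - 1) else P (b (i - 1)) with hQdef
  have hQa : ∀ i, i < r → ∃ m, Q i = P m ∧ m + 1 ≤ a i ∧ a i ≤ m + 1 := by
    intro i hi
    rcases Nat.eq_zero_or_pos i with h0 | h0
    · subst h0
      exact ⟨a 0 - 1, by simp [hQdef], by omega, by omega⟩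
    · obtain ⟨j, rfl⟩ : ∃ j, i = j + 1 := ⟨i - 1, by omega⟩
      have h2 : a (j + 1) = b j + 1 := hadj j hi
      exact ⟨b j, by simp [hQdef], by omega, by omega⟩
  have hQpos : ∀ i, i ≤ r → 0 < Q i := by
    intro i hi
    rcases Nat.eq_zero_or_pos i with h0 | h0
    · subst h0; simpa [hQdef] using hq0
    · obtain ⟨j, rfl⟩ : ∃ j, i = j + 1 := ⟨i - 1, by omega⟩
      have hbj : b j < T := hbT' j (by omega)
      have h01 : a 0 - 1 ≤ b j := by
        have := hbmono j (by omega) 0 (by omega)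
        have := hab 0 (by omega)
        omega
      have := hmono (a 0 - 1) (b j) h01 hbj
      have : 0 < P (b j) := lt_of_lt_of_le hq0 this
      simpa [hQdef] using this
  have key : ∀ i ∈ Finset.range r,
      (∑ x ∈ Finset.Icc (a i) (b i), P x) *
        (Real.logb 2 ((b i - a i + 1 : ℕ) : ℝ) -
          Real.logb 2 (∑ x ∈ Finset.Icc (a i) (b i), P x) + Real.logb 2 (P (b i)))
      ≤ c * (Real.logb 2 (Q (i + 1)) - Real.logb 2 (Q i)) := by
    intro i hi
    rw [Finset.mem_range] at hi
    obtain ⟨m, hQm, hm1, hm2⟩ := hQa i hi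
    have hbi : b i < T := hbT' i hi
    have habi : a i ≤ b i := hab i hi
    set w : ℝ := ∑ x ∈ Finset.Icc (a i) (b i), P x with hwdef
    set n : ℕ := b i - a i + 1 with hndef
    have hcard : (Finset.Icc (a i) (b i)).card = n := by
      rw [Nat.card_Icc]; omega
    have hQi_pos : 0 < Q i := hQpos i (by omega)
    have hQi1 : Q (i + 1) = P (b i) := by simp [hQdef]
    -- lower bound w ≥ n * Q i
    have hlow : (n : ℝ) * Q i ≤ w := by
      have h : ∀ x ∈ Finset.Icc (a i) (b i), Q i ≤ P x := by
        intro x hx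
        rw [Finset.mem_Icc] at hx
        rw [hQm]
        exact hmono m x (by omega) (by omega)
      have := Finset.card_nsmul_le_sum (Finset.Icc (a i) (b i)) P (Q i) h
      rwa [hcard, nsmul_eq_mul] at this
    have hup : w ≤ (n : ℝ) * P (b i) := by
      have h : ∀ x ∈ Finset.Icc (a i) (b i), P x ≤ P (b i) := by
        intro x hx
        rw [Finset.mem_Icc] at hx
        exact hmono x (b i) hx.2 hbi
      have := Finset.sum_le_card_nsmul (Finset.Icc (a i) (b i)) P (P (b i)) h
      rwa [hcard, nsmul_eq_mul] at this
    have hn_pos : (0 : ℝ) < (n : ℝ) := by positivity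
    have hw_pos : 0 < w := lt_of_lt_of_le (by positivity) hlow
    have hq_pos : 0 < P (b i) := lt_of_lt_of_le hQi_pos (by
      rw [hQm]; exact hmono m (b i) (by omega) hbi)
    -- log of lower bound
    have hlog1 : Real.logb 2 ((n : ℝ) * Q i) ≤ Real.logb 2 w :=
      Real.logb_le_logb_of_le one_lt_two (by positivity) hlow
    rw [Real.logb_mul (ne_of_gt hn_pos) (ne_of_gt hQi_pos)] at hlog1
    have hQle : Q i ≤ P (b i) := by
      rw [hQm]; exact hmono m (b i) (by omega) hbi
    have hXnn : 0 ≤ Real.logb 2 (P (b i)) - Real.logb 2 (Q i) := by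
      have := Real.logb_le_logb_of_le one_lt_two hQi_pos hQle
      linarith
    have hexpr : Real.logb 2 ((n : ℕ) : ℝ) - Real.logb 2 w + Real.logb 2 (P (b i))
        ≤ Real.logb 2 (P (b i)) - Real.logb 2 (Q i) := by linarith
    have hwle : w ≤ c := hw i hi
    have hwnn : 0 ≤ w := le_of_lt hw_pos
    calc w * (Real.logb 2 ((n : ℕ) : ℝ) - Real.logb 2 w + Real.logb 2 (P (b i)))
        ≤ w * (Real.logb 2 (P (b i)) - Real.logb 2 (Q i)) :=
          mul_le_mul_of_nonneg_left hexpr hwnn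
      _ ≤ c * (Real.logb 2 (P (b i)) - Real.logb 2 (Q i)) :=
          mul_le_mul_of_nonneg_right hwle hXnn
      _ = c * (Real.logb 2 (Q (i + 1)) - Real.logb 2 (Q i)) := by rw [hQi1]
  calc ∑ i ∈ Finset.range r, (∑ x ∈ Finset.Icc (a i) (b i), P x) *
        (Real.logb 2 ((b i - a i + 1 : ℕ) : ℝ) -
          Real.logb 2 (∑ x ∈ Finset.Icc (a i) (b i), P x) + Real.logb 2 (P (b i)))
      ≤ ∑ i ∈ Finset.range r, c * (Real.logb 2 (Q (i + 1)) - Real.logb 2 (Q i)) :=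
        Finset.sum_le_sum key
    _ = c * ∑ i ∈ Finset.range r, (Real.logb 2 (Q (i + 1)) - Real.logb 2 (Q i)) := by
        rw [Finset.mul_sum]
    _ = c * (Real.logb 2 (Q r) - Real.logb 2 (Q 0)) := by
        rw [Finset.sum_range_sub (fun i => Real.logb 2 (Q i))]
    _ = c * (Real.logb 2 (P (b (r - 1))) - Real.logb 2 (P (a 0 - 1))) := by
        have h1 : Q r = P (b (r - 1)) := by
          have : r ≠ 0 := by omega
          simp [hQdef, this]
        have h2 : Q 0 = P (a 0 - 1) := by simp [hQdef]
        rw [h1, h2]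
end
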